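/- arXiv:1507.02391 — 6 statements merged into one kernel-verified Lean document; each statement's English description precedes it below -/
import Mathlib

section
/- Let G be a finite simple graph (or finite multigraph) with vertex set V and edge set E, and define the Potts partition function P_G(q,ν) = Σ_{c : V → Fin q} ν^{m(c)}, where m(c) is the number of edges whose two endpoints receive the same colour. Then the Fortuin–Kasteleyn identity holds: P_G(q,ν) = Σ_{S ⊆ E} q^{c(S)} (ν-1)^{|S|}, where c(S) is the number of connected components of the spanning subgraph (V,S). -/
open Finset

/-- Number of monochromatic edges of a colouring `c`. -/
def monoEdges {V : Type*} [Fintype V] [DecidableEq V] (G : SimpleGraph V)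
    [DecidableRel G.Adj] {q : ℕ} (c : V → Fin q) : ℕ :=
  (G.edgeFinset.filter fun e => (e.map c).IsDiag).card

/-- Number of connected components of the spanning subgraph on `V` with edge set `S`
(isolated vertices count as components). -/
noncomputable def numComponents (V : Type*) (S : Finset (Sym2 V)) : ℕ :=
  Nat.card (SimpleGraph.fromEdgeSet (↑S : Set (Sym2 V))).ConnectedComponent

/-!
Write `ν = (ν - 1) + 1` for each monochromatic edge and expand the product: `ν ^ m(c)` becomes the
sum of `(ν - 1) ^ |S|` over the edge sets `S` on which `c` is monochromatic. Exchanging the two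
sums, it remains to count the colourings that are constant on the edges of `S`; these are the
colourings that are constant on each connected component of `(V, S)`, so there are `q ^ c(S)` of them.
-/

open SimpleGraph

theorem Finset.subset_filter_iff {α : Type*} {s t : Finset α} {p : α → Prop} [DecidablePred p] :
    t ⊆ s.filter p ↔ t ⊆ s ∧ ∀ x ∈ t, p x := by
  simp only [subset_iff, mem_filter]
  exact ⟨fun h => ⟨fun x hx => (h hx).1, fun x hx => (h hx).2⟩, fun h x hx => ⟨h.1 hx, h.2 x hx⟩⟩

theorem pow_card_eq_sum_powerset {α R : Type*} [CommRing R] (s : Finset α) (a : R) :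
    a ^ #s = ∑ t ∈ s.powerset, (a - 1) ^ #t := by
  simpa using (sum_pow_mul_eq_add_pow (a - 1) 1 s).symm

namespace SimpleGraph

variable {V α : Type*} {G : SimpleGraph V} {f : V → α}

theorem Reachable.apply_eq_of_forall_adj (hf : ∀ ⦃u v⦄, G.Adj u v → f u = f v) {u v : V}
    (h : G.Reachable u v) : f u = f v := by
  rw [reachable_eq_reflTransGen] at h
  induction h with
  | refl => rfl
  | tail _ hadj ih => exact ih.trans (hf hadj)

theorem reachableSetoid_le_ker_iff :
    G.reachableSetoid ≤ Setoid.ker f ↔ ∀ ⦃u v⦄, G.Adj u v → f u = f v :=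
  ⟨fun h _ _ hadj => Setoid.ker_def.mp (h hadj.reachable),
    fun hf _ _ h => Setoid.ker_def.mpr (h.apply_eq_of_forall_adj hf)⟩

theorem forall_isDiag_map_iff_forall_adj_fromEdgeSet {s : Set (Sym2 V)} :
    (∀ e ∈ s, (e.map f).IsDiag) ↔ ∀ ⦃u v⦄, (fromEdgeSet s).Adj u v → f u = f v := by
  refine ⟨fun h u v huv => ?_, fun h e he => ?_⟩
  · simpa using h _ ((fromEdgeSet_adj s).mp huv).1
  · induction e using Sym2.ind with
    | _ u v =>
      rw [Sym2.map_mk, Sym2.mk_isDiag_iff]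
      by_cases huv : u = v
      · rw [huv]
      · exact h ((fromEdgeSet_adj s).mpr ⟨he, huv⟩)

def constOnAdjEquiv (G : SimpleGraph V) (α : Type*) :
    {f : V → α // ∀ ⦃u v⦄, G.Adj u v → f u = f v} ≃ (G.ConnectedComponent → α) :=
  (Equiv.subtypeEquivRight fun _ => reachableSetoid_le_ker_iff.symm).trans
    (Setoid.liftEquiv G.reachableSetoid)

theorem card_constOnAdj [Finite V] (G : SimpleGraph V) (α : Type*) :
    Nat.card {f : V → α // ∀ ⦃u v⦄, G.Adj u v → f u = f v}
      = Nat.card α ^ Nat.card G.ConnectedComponent := by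
  rw [Nat.card_congr (constOnAdjEquiv G α), Nat.card_fun]

end SimpleGraph

theorem card_colorings_monochromatic_on (V : Type*) [Finite V] (S : Finset (Sym2 V)) (q : ℕ) :
    Nat.card {c : V → Fin q // ∀ e ∈ S, (e.map c).IsDiag} = q ^ numComponents V S := by
  simp_rw [← mem_coe (s := S), forall_isDiag_map_iff_forall_adj_fromEdgeSet]
  rw [card_constOnAdj, Nat.card_fin, numComponents]

/-- Fortuin–Kasteleyn identity: the Potts partition function
`P_G(q,ν) = Σ_{c : V → Fin q} ν^{m(c)}` equals
`Σ_{S ⊆ E} q^{c(S)} (ν-1)^{|S|}`. -/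
theorem potts_fortuin_kasteleyn {V : Type*} [Fintype V] [DecidableEq V]
    (G : SimpleGraph V) [DecidableRel G.Adj] (q : ℕ)
    {R : Type*} [CommRing R] (ν : R) :
    ∑ c : V → Fin q, ν ^ monoEdges G c
      = ∑ S ∈ G.edgeFinset.powerset,
          (q : R) ^ numComponents V S * (ν - 1) ^ S.card := by
  simp_rw [monoEdges, pow_card_eq_sum_powerset _ ν]
  rw [sum_comm' (t' := G.edgeFinset.powerset)
    (s' := fun S => univ.filter fun c : V → Fin q => ∀ e ∈ S, (e.map c).IsDiag)
    (fun c S => by simp only [mem_univ, mem_powerset, mem_filter, subset_filter_iff]; tauto)]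
  refine sum_congr rfl fun S _ => ?_
  rw [sum_const, nsmul_eq_mul, ← Fintype.card_subtype, ← Nat.card_eq_fintype_card,
    card_colorings_monochromatic_on, Nat.cast_pow]
end

section
/- For a finite graph G and a natural number q ≥ 1, the number of proper q-colourings of G equals Σ_{S ⊆ E(G)} q^{c(S)} (-1)^{|S|}, i.e. the Potts partition function specialized at ν = 0 equals the chromatic polynomial of G evaluated at q. -/
open Finset

/-!
Inclusion–exclusion over the edges: a colouring is proper iff it lies in none of the sets
"edge `e` is monochromatic", so the number of proper colourings is the alternating sum, over
edge sets `S`, of the number of colourings monochromatic on every edge of `S`. Those are exactly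
the colourings constant on the connected components of `(V, S)`, of which there are `q ^ c(S)`.
-/

theorem Finset.mem_inf_iff_forall {ι α : Type*} [Fintype α] [DecidableEq α] {s : Finset ι}
    {f : ι → Finset α} {a : α} : a ∈ s.inf f ↔ ∀ i ∈ s, a ∈ f i := by
  simpa only [singleton_subset_iff] using Finset.le_inf_iff (a := {a}) (s := s) (f := f)

namespace SimpleGraph

variable {V α : Type*} (H : SimpleGraph V)

theorem eq_of_reachable_of_forall_adj {c : V → α} (hc : ∀ v w, H.Adj v w → c v = c w)
    {v w : V} (h : H.Reachable v w) : c v = c w := by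
  obtain ⟨p⟩ := h
  induction p with
  | nil => rfl
  | cons hadj _ ih => exact (hc _ _ hadj).trans ih

def constantOnAdjEquiv :
    {c : V → α // ∀ v w, H.Adj v w → c v = c w} ≃ (H.ConnectedComponent → α) where
  toFun c := ConnectedComponent.lift c.1 fun _ _ p _ =>
    H.eq_of_reachable_of_forall_adj c.2 p.reachable
  invFun f := ⟨fun v => f (H.connectedComponentMk v), fun _ _ h =>
    congrArg f (ConnectedComponent.connectedComponentMk_eq_of_adj h)⟩
  left_inv _ := rfl
  right_inv _ := funext fun x => x.ind fun _ => rfl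

theorem card_constantOnAdj [Finite V] :
    Nat.card {c : V → α // ∀ v w, H.Adj v w → c v = c w} =
      Nat.card α ^ Nat.card H.ConnectedComponent := by
  rw [Nat.card_congr H.constantOnAdjEquiv, Nat.card_fun]

theorem forall_isDiag_map_iff_fromEdgeSet {t : Set (Sym2 V)} {c : V → α} :
    (∀ e ∈ t, (e.map c).IsDiag) ↔ ∀ v w, (fromEdgeSet t).Adj v w → c v = c w := by
  refine ⟨fun h v w hvw => ?_, fun h e he => ?_⟩
  · simpa using h _ ((fromEdgeSet_adj _).mp hvw).1
  · induction e using Sym2.ind with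
    | _ v w =>
    rcases eq_or_ne v w with rfl | hne
    · simp
    · simpa using h v w ((fromEdgeSet_adj _).mpr ⟨he, hne⟩)

theorem forall_adj_ne_iff_forall_edge {c : V → α} :
    (∀ v w, H.Adj v w → c v ≠ c w) ↔ ∀ e ∈ H.edgeSet, ¬(e.map c).IsDiag := by
  refine ⟨fun h e he => ?_, fun h v w hvw => by simpa using h s(v, w) hvw⟩
  induction e using Sym2.ind with
  | _ v w => simpa using h v w he

end SimpleGraph

open SimpleGraph

theorem card_inf_filter_isDiag_map {V α : Type*} [Fintype V] [DecidableEq V] [Fintype α]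
    [DecidableEq α] (t : Finset (Sym2 V)) :
    #(t.inf fun e => univ.filter fun c : V → α => (e.map c).IsDiag) =
      Fintype.card α ^ numComponents V t := by
  rw [numComponents, ← Nat.card_eq_fintype_card, ← card_constantOnAdj, Nat.card_eq_fintype_card,
    ← Fintype.card_coe]
  refine Fintype.card_congr (Equiv.subtypeEquivRight fun c => ?_)
  simp only [mem_inf_iff_forall, mem_filter, mem_univ, true_and, mem_coe,
    ← forall_isDiag_map_iff_fromEdgeSet]

theorem proper_colourings_eq_potts_at_zero_general {V : Type*} [Fintype V] [DecidableEq V]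
    (G : SimpleGraph V) [DecidableRel G.Adj] (q : ℕ) :
    ((Finset.univ.filter fun c : V → Fin q =>
        ∀ v w, G.Adj v w → c v ≠ c w).card : ℤ)
      = ∑ S ∈ G.edgeFinset.powerset,
          (q : ℤ) ^ numComponents V S * (-1 : ℤ) ^ S.card := by
  have proper_eq_inf_compl :
      (univ.filter fun c : V → Fin q => ∀ v w, G.Adj v w → c v ≠ c w) =
        G.edgeFinset.inf fun e => (univ.filter fun c => (e.map c).IsDiag)ᶜ := by
    ext c
    simp [mem_inf_iff_forall, forall_adj_ne_iff_forall_edge]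
  rw [proper_eq_inf_compl, inclusion_exclusion_card_inf_compl]
  refine sum_congr rfl fun S _ => ?_
  rw [card_inf_filter_isDiag_map, Fintype.card_fin, mul_comm, Nat.cast_pow]

/-- The number of proper `q`-colourings of a finite simple graph `G` equals
`Σ_{S ⊆ E(G)} q^{c(S)} (-1)^{|S|}` (the Potts partition function at `ν = 0`,
i.e. the chromatic polynomial evaluated at `q`). -/
theorem proper_colourings_eq_potts_at_zero {V : Type*} [Fintype V] [DecidableEq V]
    (G : SimpleGraph V) [DecidableRel G.Adj] (q : ℕ) (hq : 1 ≤ q) :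
    ((Finset.univ.filter fun c : V → Fin q =>
        ∀ v w, G.Adj v w → c v ≠ c w).card : ℤ)
      = ∑ S ∈ G.edgeFinset.powerset,
          (q : ℤ) ^ numComponents V S * (-1 : ℤ) ^ S.card :=
  proper_colourings_eq_potts_at_zero_general G q
end

section
/- Let M(t) be the generating function of rooted planar maps counted by edges, the unique formal power series in ℚ[[t]] satisfying the polynomial equation 27 t² M(t)² + (1 - 18t) M(t) + 16t - 1 = 0 with M(0) = 1. Then for every n, [t^n] M(t) = (2 · 3^n / ((n+1)(n+2))) · binomial(2n, n). -/
open PowerSeries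
private noncomputable def Cs : PowerSeries ℚ :=
  PowerSeries.mk (fun n => (catalan n : ℚ) * 3 ^ n)

private noncomputable def Tm : PowerSeries ℚ :=
  PowerSeries.mk (fun n => (2 * 3 ^ n / ((n + 1) * (n + 2)) : ℚ) * (Nat.choose (2 * n) n : ℚ))

private lemma cat_rel (n : ℕ) :
    ((n : ℚ) + 2) * (catalan (n + 1) : ℚ) = 2 * (2 * n + 1) * (catalan n : ℚ) := by
  have h1 := Nat.succ_mul_centralBinom_succ n
  have h2 := succ_mul_catalan_eq_centralBinom n
  have h3 := succ_mul_catalan_eq_centralBinom (n + 1)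
  have h1' : ((n : ℚ) + 1) * (Nat.centralBinom (n+1) : ℚ) = 2 * (2*n+1) * (Nat.centralBinom n : ℚ) := by
    exact_mod_cast congrArg (Nat.cast : ℕ → ℚ) h1
  have h2' : ((n : ℚ) + 1) * (catalan n : ℚ) = (Nat.centralBinom n : ℚ) := by
    exact_mod_cast congrArg (Nat.cast : ℕ → ℚ) h2
  have h3' : ((n : ℚ) + 2) * (catalan (n+1) : ℚ) = (Nat.centralBinom (n+1) : ℚ) := by
    have := congrArg (Nat.cast : ℕ → ℚ) h3
    push_cast at this ⊢
    linarith
  have hn1 : ((n : ℚ) + 1) ≠ 0 := by positivity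
  rw [h3']
  nlinarith [h1', h2']

private lemma choose_eq (n : ℕ) :
    (Nat.choose (2 * n) n : ℚ) = ((n : ℚ) + 1) * (catalan n : ℚ) := by
  have h2 := succ_mul_catalan_eq_centralBinom n
  have : (Nat.centralBinom n : ℚ) = ((n:ℚ)+1) * catalan n := by
    exact_mod_cast (congrArg (Nat.cast : ℕ → ℚ) h2).symm
  rw [← this]; rfl

private lemma hCs_eq : Cs = 1 + 3 * PowerSeries.X * Cs ^ 2 := by
  ext n
  cases n with
  | zero => simp [Cs]
  | succ n =>
    have h3 : (3 : PowerSeries ℚ) * PowerSeries.X * Cs ^ 2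
        = PowerSeries.X * (PowerSeries.C 3 * Cs ^ 2) := by
      simp only [map_ofNat]; ring
    rw [map_add, h3, PowerSeries.coeff_succ_X_mul, PowerSeries.coeff_C_mul]
    simp only [Cs, coeff_mk, sq, PowerSeries.coeff_one, Nat.succ_ne_zero, if_false, zero_add,
      PowerSeries.coeff_mul]
    rw [catalan_succ']
    push_cast
    rw [Finset.sum_mul, Finset.mul_sum]
    apply Finset.sum_congr rfl
    intro p hp
    have := Finset.HasAntidiagonal.mem_antidiagonal.mp hp
    rw [← this]
    ring

private lemma hTm_lin : 9 * PowerSeries.X * Tm + Cs = 1 + 12 * PowerSeries.X * Cs := by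
  ext n
  cases n with
  | zero => simp [Cs, Tm]
  | succ n =>
    have h9 : (9 : PowerSeries ℚ) * PowerSeries.X * Tm
        = PowerSeries.X * (PowerSeries.C 9 * Tm) := by simp only [map_ofNat]; ring
    have h12 : (12 : PowerSeries ℚ) * PowerSeries.X * Cs
        = PowerSeries.X * (PowerSeries.C 12 * Cs) := by simp only [map_ofNat]; ring
    rw [map_add, map_add, h9, h12, PowerSeries.coeff_succ_X_mul, PowerSeries.coeff_succ_X_mul,
      PowerSeries.coeff_C_mul, PowerSeries.coeff_C_mul]
    simp only [Cs, Tm, coeff_mk, PowerSeries.coeff_one, Nat.succ_ne_zero, if_false, zero_add]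
    rw [choose_eq]
    have hc := cat_rel n
    have hn1 : ((n : ℚ) + 1) ≠ 0 := by positivity
    have hn2 : ((n : ℚ) + 2) ≠ 0 := by positivity
    push_cast
    field_simp
    linear_combination (3 * 3^n : ℚ) * hc

private lemma hTm_eq : 27 * PowerSeries.X ^ 2 * Tm ^ 2 + (1 - 18 * PowerSeries.X) * Tm
    + 16 * PowerSeries.X - 1 = 0 := by
  set X := (PowerSeries.X : PowerSeries ℚ)
  have hA : 9 * X * Tm = 1 + 12 * X * Cs - Cs := by
    linear_combination hTm_lin
  have hC := hCs_eq
  have key : 81 * X^2 * (27 * X ^ 2 * Tm ^ 2 + (1 - 18 * X) * Tm + 16 * X - 1) = 0 := by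
    linear_combination (27*X^2*(9*X*Tm + 1 + 12*X*Cs - Cs) + 9*X*(1-18*X)) * hA
      + (-(9*X)*(1-12*X)^2) * hC
  have hX : (81 : PowerSeries ℚ) * X^2 ≠ 0 := by
    intro h
    have := congrArg (PowerSeries.coeff 2) h
    have h81 : (81 : PowerSeries ℚ) * X^2 = PowerSeries.C 81 * X^2 := by
      simp only [map_ofNat]
    rw [h81, PowerSeries.coeff_C_mul, PowerSeries.coeff_X_pow] at this
    norm_num at this
  exact (mul_eq_zero.mp key).resolve_left hX

/-- Tutte's formula for the number of rooted planar maps: if `M ∈ ℚ[[t]]` is the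
unique power series with constant term `1` satisfying
`27 t² M² + (1 - 18t) M + 16t - 1 = 0`, then
`[tⁿ] M = 2·3ⁿ·binomial(2n,n)/((n+1)(n+2))`. -/
theorem planar_maps_coeff (M : PowerSeries ℚ)
    (h0 : PowerSeries.constantCoeff M = 1)
    (heq : 27 * PowerSeries.X ^ 2 * M ^ 2 + (1 - 18 * PowerSeries.X) * M
        + 16 * PowerSeries.X - 1 = 0) (n : ℕ) :
    PowerSeries.coeff n M
      = (2 * 3 ^ n / ((n + 1) * (n + 2)) : ℚ) * (Nat.choose (2 * n) n : ℚ) := by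
  have hfac : (M - Tm) * (27 * PowerSeries.X ^ 2 * (M + Tm) + 1 - 18 * PowerSeries.X) = 0 := by
    linear_combination heq - hTm_eq
  have hne : 27 * PowerSeries.X ^ 2 * (M + Tm) + 1 - 18 * PowerSeries.X ≠ 0 := by
    intro h
    have := congrArg (PowerSeries.constantCoeff) h
    simp [PowerSeries.constantCoeff_X] at this
  have hMT : M = Tm := by
    have := (mul_eq_zero.mp hfac).resolve_right hne
    linear_combination this
  rw [hMT]
  simp [Tm]
end

section
/- The formal power series M(t) = ((1-12t)^{3/2} - 1 + 18t)/(54 t²), interpreted via the binomial series expansion of (1-12t)^{3/2} in ℚ[[t]], satisfies 27 t² M(t)² + (1-18t) M(t) + 16t - 1 = 0 and has constant term 1. -/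
open PowerSeries Finset

/-- The generalized binomial coefficient `binomial(3/2, n)` in `ℚ`. -/
noncomputable def binomThreeHalves (n : ℕ) : ℚ :=
  (∏ i ∈ Finset.range n, ((3 : ℚ) / 2 - i)) / n.factorial

/-- The binomial series `(1 - 12t)^{3/2} = Σ_n binomial(3/2,n) (-12t)ⁿ` in `ℚ[[t]]`. -/
noncomputable def binomialSeriesThreeHalves : PowerSeries ℚ :=
  PowerSeries.mk fun n => binomThreeHalves n * (-12) ^ n

/-!
The binomial series `B = (1 - 12t)^{3/2}` satisfies `(1 - 12t) B' = -18 B`, so `B²` and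
`(1 - 12t)³` both solve `(1 - 12t) F' = -36 F` with `F(0) = 1`. Over `ℚ` this equation determines
`F` coefficient by coefficient, hence `B² = (1 - 12t)³`. With `54 t² M = B - 1 + 18t`, the
quadratic equation for `M`, multiplied by `108 t²`, becomes exactly `B² = (1 - 12t)³`.
-/

namespace PowerSeries

variable {R : Type*}

theorem coeff_one_sub_C_mul_X_mul_derivative [CommRing R] (c : R) (F : R⟦X⟧) (n : ℕ) :
    coeff n ((1 - C c * X) * d⁄dX R F) = (n + 1) * coeff (n + 1) F - c * n * coeff n F := by
  rcases n with _ | n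
  · simpa using coeff_derivative F 0
  · simp only [sub_mul, one_mul, mul_assoc, map_sub, coeff_C_mul, coeff_succ_X_mul,
      coeff_derivative]
    push_cast
    ring

theorem one_sub_C_mul_X_mul_derivative_pow [CommRing R] (c : R) (k : ℕ) :
    (1 - C c * X) * d⁄dX R ((1 - C c * X) ^ k) = C (-(k * c)) * (1 - C c * X) ^ k := by
  rcases k with _ | k
  · simp
  · simp only [derivative_pow, map_sub, derivative_one, Derivation.leibniz, derivative_C,
      derivative_X, smul_eq_mul, map_neg, map_mul, Nat.cast_add, Nat.cast_one, map_add, map_one,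
      map_natCast, add_tsub_cancel_right, mul_one, mul_zero, add_zero, zero_sub]
    ring

theorem eq_zero_of_one_sub_C_mul_X_mul_derivative_eq [Field R] [CharZero R] {c a : R}
    {F : R⟦X⟧} (hF : (1 - C c * X) * d⁄dX R F = C a * F) (h0 : constantCoeff F = 0) :
    F = 0 := by
  ext n
  induction n with
  | zero => simpa using h0
  | succ n ih =>
    have hn := congrArg (coeff n) hF
    rw [coeff_one_sub_C_mul_X_mul_derivative, coeff_C_mul, ih] at hn
    have : (n + 1 : R) ≠ 0 := by exact_mod_cast n.succ_ne_zero
    simpa [this] using hn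

theorem eq_of_one_sub_C_mul_X_mul_derivative_eq [Field R] [CharZero R] {c a : R}
    {F G : R⟦X⟧} (hF : (1 - C c * X) * d⁄dX R F = C a * F)
    (hG : (1 - C c * X) * d⁄dX R G = C a * G) (h0 : constantCoeff F = constantCoeff G) :
    F = G := by
  rw [← sub_eq_zero]
  refine eq_zero_of_one_sub_C_mul_X_mul_derivative_eq (c := c) (a := a) ?_ (by simp [h0])
  rw [map_sub, mul_sub, mul_sub, hF, hG]

end PowerSeries

theorem coeff_zero_binomialSeriesThreeHalves : coeff 0 binomialSeriesThreeHalves = 1 := by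
  simp [binomialSeriesThreeHalves, binomThreeHalves]

theorem coeff_one_binomialSeriesThreeHalves : coeff 1 binomialSeriesThreeHalves = -18 := by
  norm_num [binomialSeriesThreeHalves, binomThreeHalves]

theorem coeff_two_binomialSeriesThreeHalves : coeff 2 binomialSeriesThreeHalves = 54 := by
  norm_num [binomialSeriesThreeHalves, binomThreeHalves, prod_range_succ]

theorem binomThreeHalves_succ (n : ℕ) :
    (n + 1) * binomThreeHalves (n + 1) = (3 / 2 - n) * binomThreeHalves n := by
  have : (n.factorial : ℚ) ≠ 0 := by positivity
  simp only [binomThreeHalves, prod_range_succ, Nat.factorial_succ]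
  push_cast
  field_simp

theorem one_sub_C_mul_X_mul_derivative_binomialSeriesThreeHalves :
    (1 - C 12 * X) * d⁄dX ℚ binomialSeriesThreeHalves =
      C (-18) * binomialSeriesThreeHalves := by
  ext n
  rw [coeff_one_sub_C_mul_X_mul_derivative, coeff_C_mul]
  simp only [binomialSeriesThreeHalves, coeff_mk, ← mul_assoc, binomThreeHalves_succ, pow_succ]
  ring

theorem binomialSeriesThreeHalves_sq : binomialSeriesThreeHalves ^ 2 = (1 - 12 * X) ^ 3 := by
  rw [← map_ofNat C 12]
  refine eq_of_one_sub_C_mul_X_mul_derivative_eq (c := 12) (a := -36) ?_ ?_ ?_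
  · rw [derivative_pow, show (-36 : ℚ) = 2 * -18 by norm_num, map_mul, map_ofNat C 2]
    linear_combination
      2 * binomialSeriesThreeHalves * one_sub_C_mul_X_mul_derivative_binomialSeriesThreeHalves
  · convert one_sub_C_mul_X_mul_derivative_pow (12 : ℚ) 3 using 3
    norm_num
  · rw [map_pow, ← coeff_zero_eq_constantCoeff_apply, coeff_zero_binomialSeriesThreeHalves]
    simp

theorem trunc_two_binomialSeriesThreeHalves :
    (trunc 2 binomialSeriesThreeHalves : ℚ⟦X⟧) = 1 - 18 * X := by
  rw [trunc_succ, trunc_succ, trunc_zero', coeff_zero_binomialSeriesThreeHalves,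
    coeff_one_binomialSeriesThreeHalves]
  simp [Polynomial.coe_monomial, monomial_eq_C_mul_X_pow, sub_eq_add_neg, map_ofNat C 18]

/-- The power series `M(t) = ((1-12t)^{3/2} - 1 + 18t)/(54 t²)` exists in `ℚ[[t]]`
(i.e. `(1-12t)^{3/2} - 1 + 18t` is divisible by `54 t²`), has constant term `1`,
and satisfies `27 t² M² + (1 - 18t) M + 16t - 1 = 0`. -/
theorem planar_maps_closed_form :
    ∃ M : PowerSeries ℚ,
      54 * PowerSeries.X ^ 2 * M = binomialSeriesThreeHalves - 1 + 18 * PowerSeries.X ∧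
      27 * PowerSeries.X ^ 2 * M ^ 2 + (1 - 18 * PowerSeries.X) * M
        + 16 * PowerSeries.X - 1 = 0 ∧
      PowerSeries.constantCoeff M = 1 := by
  set B := binomialSeriesThreeHalves
  set S := mk fun i => coeff (i + 2) B
  have h54 : (54 : ℚ⟦X⟧) * C 54⁻¹ = 1 := by rw [← map_ofNat C 54, ← map_mul]; norm_num
  have hS : X ^ 2 * S = B - 1 + 18 * X := by
    linear_combination
      (eq_X_pow_mul_shift_add_trunc 2 B).symm - trunc_two_binomialSeriesThreeHalves
  have hM : 54 * X ^ 2 * (C 54⁻¹ * S) = B - 1 + 18 * X := by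
    linear_combination hS + X ^ 2 * S * h54
  refine ⟨C 54⁻¹ * S, hM, ?_, ?_⟩
  · have h108 : (108 * X ^ 2 : ℚ⟦X⟧) ≠ 0 := by
      refine mul_ne_zero ?_ (pow_ne_zero _ X_ne_zero)
      rw [← map_ofNat C 108, Ne, map_eq_zero_iff C C_injective]
      norm_num
    refine (mul_eq_zero.mp ?_).resolve_left h108
    linear_combination (54 * X ^ 2 * (C 54⁻¹ * S) + B + 1 - 18 * X) * hM
      + binomialSeriesThreeHalves_sq
  · simp [S, B, coeff_two_binomialSeriesThreeHalves]
end

section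
/- Let m ≥ 3 be an odd integer and q = 2 + 2cos(2π/m). For each j with 2 ≤ j ≤ (m-1)/2, set q_j = 2 + 2cos(2jπ/m). Then the quadratic equation q(q - q_j) v² + q(q_j - 4) v + (4 - q_j) = 0 has exactly the two roots v_j⁺ = sin(jπ/m)/(2cos(π/m)·sin((j+1)π/m)) and v_j⁻ = sin(jπ/m)/(2cos(π/m)·sin((j-1)π/m)), and these two roots are distinct. -/
/-!
With `θ = π/m` and `α = jθ` one has `q = 4 cos² θ`, `q_j = 4 cos² α`, and the identities
`sin (α + θ) sin (α - θ) = cos² θ - cos² α`, `sin (α + θ) + sin (α - θ) = 2 sin α cos θ` make the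
quadratic equal to `16 cos² θ sin (α + θ) sin (α - θ) (v - v⁺) (v - v⁻)`. For `0 < θ < α < π/2`
the leading coefficient is positive, and `v⁺ ≠ v⁻` because
`sin (α + θ) - sin (α - θ) = 2 cos α sin θ ≠ 0`. The bounds `2 ≤ j ≤ (m - 1)/2` give
`θ < α < π/2`.
-/

open Real

theorem mul_sub_mul_sub_eq_zero_iff {R : Type*} [Ring R] [NoZeroDivisors R] {a r s : R}
    (ha : a ≠ 0) (v : R) : a * (v - r) * (v - s) = 0 ↔ v = r ∨ v = s := by
  simp only [mul_eq_zero, ha, false_or, sub_eq_zero]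

namespace Real

theorem sin_add_mul_sin_sub (x y : ℝ) : sin (x + y) * sin (x - y) = cos y ^ 2 - cos x ^ 2 := by
  rw [sin_add, sin_sub]
  linear_combination cos y ^ 2 * sin_sq_add_cos_sq x - cos x ^ 2 * sin_sq_add_cos_sq y

theorem sin_add_add_sin_sub (x y : ℝ) : sin (x + y) + sin (x - y) = 2 * sin x * cos y := by
  rw [sin_add, sin_sub]; ring

theorem two_add_two_mul_cos_two_mul (x : ℝ) : 2 + 2 * cos (2 * x) = 4 * cos x ^ 2 := by
  rw [cos_two_mul]; ring

theorem quadratic_factor_of_angles (θ α v : ℝ) (hθ : cos θ ≠ 0) (hp : sin (α + θ) ≠ 0)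
    (hm : sin (α - θ) ≠ 0) :
    let q := 2 + 2 * cos (2 * θ)
    let qα := 2 + 2 * cos (2 * α)
    q * (q - qα) * v ^ 2 + q * (qα - 4) * v + (4 - qα) =
      16 * cos θ ^ 2 * sin (α + θ) * sin (α - θ) *
        (v - sin α / (2 * cos θ * sin (α + θ))) * (v - sin α / (2 * cos θ * sin (α - θ))) := by
  intro q qα
  have expand : 16 * cos θ ^ 2 * sin (α + θ) * sin (α - θ) *
        (v - sin α / (2 * cos θ * sin (α + θ))) * (v - sin α / (2 * cos θ * sin (α - θ))) =
      16 * cos θ ^ 2 * (sin (α + θ) * sin (α - θ)) * v ^ 2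
        - 8 * cos θ * sin α * (sin (α + θ) + sin (α - θ)) * v + 4 * sin α ^ 2 := by
    field_simp
    ring
  rw [expand, sin_add_mul_sin_sub, sin_add_add_sin_sub]
  simp only [q, qα, two_add_two_mul_cos_two_mul]
  linear_combination (-4 + 16 * cos θ ^ 2 * v) * sin_sq_add_cos_sq α

theorem div_two_mul_sin_add_ne_div_two_mul_sin_sub {θ α : ℝ} (hsθ : sin θ ≠ 0)
    (hcθ : cos θ ≠ 0) (hsα : sin α ≠ 0) (hcα : cos α ≠ 0) :
    sin α / (2 * cos θ * sin (α + θ)) ≠ sin α / (2 * cos θ * sin (α - θ)) := by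
  intro h
  have hsin : sin (α + θ) = sin (α - θ) :=
    mul_left_cancel₀ (mul_ne_zero two_ne_zero hcθ) <|
      inv_inj.mp <| mul_left_cancel₀ hsα <| by simpa only [div_eq_mul_inv] using h
  rw [sin_add, sin_sub] at hsin
  exact mul_ne_zero (mul_ne_zero two_ne_zero hcα) hsθ (by linarith)

theorem quadratic_roots_of_angles {θ α : ℝ} (hθ : 0 < θ) (hθα : θ < α) (hα : α < π / 2) :
    let q := 2 + 2 * cos (2 * θ)
    let qα := 2 + 2 * cos (2 * α)
    let vp := sin α / (2 * cos θ * sin (α + θ))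
    let vm := sin α / (2 * cos θ * sin (α - θ))
    vp ≠ vm ∧ ∀ v : ℝ, q * (q - qα) * v ^ 2 + q * (qα - 4) * v + (4 - qα) = 0 ↔ v = vp ∨ v = vm := by
  intro q qα vp vm
  have hsθ : 0 < sin θ := sin_pos_of_pos_of_lt_pi hθ (by linarith [pi_pos])
  have hcθ : 0 < cos θ := cos_pos_of_mem_Ioo ⟨by linarith, by linarith⟩
  have hsα : 0 < sin α := sin_pos_of_pos_of_lt_pi (by linarith) (by linarith [pi_pos])
  have hcα : 0 < cos α := cos_pos_of_mem_Ioo ⟨by linarith, hα⟩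
  have hp : 0 < sin (α + θ) := sin_pos_of_pos_of_lt_pi (by linarith) (by linarith)
  have hm : 0 < sin (α - θ) := sin_pos_of_pos_of_lt_pi (by linarith) (by linarith [pi_pos])
  refine ⟨div_two_mul_sin_add_ne_div_two_mul_sin_sub hsθ.ne' hcθ.ne' hsα.ne' hcα.ne', fun v => ?_⟩
  rw [quadratic_factor_of_angles θ α v hcθ.ne' hp.ne' hm.ne']
  exact mul_sub_mul_sub_eq_zero_iff (by positivity) v

end Real

theorem quadratic_roots_vjpm_general (m j : ℕ)
    (hj2 : 2 ≤ j) (hjn : j ≤ (m - 1) / 2) :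
    let q : ℝ := 2 + 2 * Real.cos (2 * π / m)
    let qj : ℝ := 2 + 2 * Real.cos (2 * j * π / m)
    let vp : ℝ := Real.sin (j * π / m) / (2 * Real.cos (π / m) * Real.sin ((j + 1) * π / m))
    let vm : ℝ := Real.sin (j * π / m) / (2 * Real.cos (π / m) * Real.sin ((j - 1 : ℕ) * π / m))
    vp ≠ vm ∧
      ∀ v : ℝ, q * (q - qj) * v ^ 2 + q * (qj - 4) * v + (4 - qj) = 0 ↔
        (v = vp ∨ v = vm) := by
  have h2j : 2 * (j : ℝ) + 1 ≤ m := by exact_mod_cast (by omega : 2 * j + 1 ≤ m)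
  have hm : (0 : ℝ) < m := by linarith
  have hθ : 0 < π / m := by positivity
  have hθα : π / m < j * π / m := by
    gcongr
    exact lt_mul_left pi_pos (by exact_mod_cast (by omega : 1 < j))
  have hα : j * π / m < π / 2 := by
    rw [div_lt_div_iff₀ hm two_pos]
    nlinarith [pi_pos]
  rw [show 2 * π / m = 2 * (π / m) by ring, show 2 * (j : ℝ) * π / m = 2 * (j * π / m) by ring,
    show ((j : ℝ) + 1) * π / m = j * π / m + π / m by ring, Nat.cast_pred (by omega),
    show ((j : ℝ) - 1) * π / m = j * π / m - π / m by ring]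
  exact quadratic_roots_of_angles hθ hθα hα

/-- Let `m ≥ 3` be odd, `q = 2 + 2cos(2π/m)` and, for `2 ≤ j ≤ (m-1)/2`,
`q_j = 2 + 2cos(2jπ/m)`. Then the quadratic
`q(q - q_j) v² + q(q_j - 4) v + (4 - q_j) = 0` has exactly the two distinct roots
`v_j⁺ = sin(jπ/m)/(2cos(π/m)sin((j+1)π/m))` and
`v_j⁻ = sin(jπ/m)/(2cos(π/m)sin((j-1)π/m))`. -/
theorem quadratic_roots_vjpm (m j : ℕ) (hm : Odd m) (hm3 : 3 ≤ m)
    (hj2 : 2 ≤ j) (hjn : j ≤ (m - 1) / 2) :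
    let q : ℝ := 2 + 2 * Real.cos (2 * π / m)
    let qj : ℝ := 2 + 2 * Real.cos (2 * j * π / m)
    let vp : ℝ := Real.sin (j * π / m) / (2 * Real.cos (π / m) * Real.sin ((j + 1) * π / m))
    let vm : ℝ := Real.sin (j * π / m) / (2 * Real.cos (π / m) * Real.sin ((j - 1 : ℕ) * π / m))
    vp ≠ vm ∧
      ∀ v : ℝ, q * (q - qj) * v ^ 2 + q * (qj - 4) * v + (4 - qj) = 0 ↔
        (v = vp ∨ v = vm) :=
  quadratic_roots_vjpm_general m j hj2 hjn
end

section
/- For every natural number m ≥ 1 the polynomial identity T_m(u)² - 1 = 4^{m-1}·(u²-1)·(u²)^{[m even]}·Π_{j=1}^{⌊(m-1)/2⌋} (u² - cos²(jπ/m))² holds over ℝ, where the exponent [m even] equals 1 if m is even and 0 otherwise. -/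
/-!
By the Pell identity `T_m² - (X² - 1) U_{m-1}² = 1`, the claim is a statement about `U_{m-1}²`.
Over `ℝ`, `U_{m-1}` has leading coefficient `2^{m-1}` and the `m - 1` simple roots `cos (jπ/m)`,
`1 ≤ j ≤ m - 1`. Since `cos ((m - j)π/m) = -cos (jπ/m)`, pairing `j` with `m - j` turns the
product of the linear factors into a product of factors `u² - cos² (jπ/m)`, times `u` for the
self-paired middle index `j = m/2` when `m` is even.
-/

open Polynomial Real Finset

namespace Polynomial.Chebyshev

variable (R : Type*) [CommRing R]

theorem T_sq_sub_mul_U_sq (n : ℤ) : T R n ^ 2 - (X ^ 2 - 1) * U R (n - 1) ^ 2 = 1 := by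
  have hstep (n : ℤ) : T R (n + 1) ^ 2 - (X ^ 2 - 1) * U R n ^ 2
      = T R n ^ 2 - (X ^ 2 - 1) * U R (n - 1) ^ 2 := by
    have hT : T R (n + 1) = X * T R n + (X ^ 2 - 1) * U R (n - 1) := by
      have := T_eq_X_mul_T_sub_pol_U R (n - 1)
      rw [show n - 1 + 2 = n + 1 by ring, show n - 1 + 1 = n by ring] at this
      rw [this]; ring
    have hU : U R n = X * U R (n - 1) + T R n := by
      simpa using U_eq_X_mul_U_add_T R (n - 1)
    rw [hT, hU]; ring
  induction n using Int.induction_on with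
  | zero => simp
  | succ n ih => rwa [add_sub_cancel_right, hstep]
  | pred n ih =>
    have := hstep (-n - 1)
    rwa [sub_add_cancel, ih, eq_comm] at this

theorem U_real_eq_C_mul_prod (n : ℕ) :
    U ℝ n = Polynomial.C (2 ^ n) *
      ∏ k ∈ range n, (X - Polynomial.C (cos ((k + 1) * π / (n + 1)))) := by
  have hinj := (range n).nodup_map_iff_injOn.mp (roots_U_real_nodup n)
  have hcard : Multiset.card (U ℝ n).roots = (U ℝ n).natDegree := by
    rw [roots_U_real, Finset.card_val, card_image_of_injOn hinj, card_range,
      natDegree_U_natCast]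
  conv_lhs => rw [← C_leadingCoeff_mul_prod_multiset_X_sub_C hcard]
  rw [leadingCoeff_U_natCast, roots_U_real]
  exact congrArg _ (prod_image hinj)

theorem U_real_natCast_sub_one_eq_C_mul_prod {n : ℕ} (hn : n ≠ 0) :
    U ℝ (n - 1) = Polynomial.C (2 ^ (n - 1)) *
      ∏ j ∈ Icc 1 (n - 1), (X - Polynomial.C (cos (j * π / n))) := by
  obtain ⟨k, rfl⟩ := Nat.exists_eq_add_one_of_ne_zero hn
  have := U_real_eq_C_mul_prod k
  push_cast at this ⊢
  rw [add_sub_cancel_right, this, range_eq_Ico, ← Ico_add_one_right_eq_Icc,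
    ← prod_Ico_add' _ 0 k 1]
  simp only [Nat.cast_add, Nat.cast_one]

end Polynomial.Chebyshev

theorem Finset.prod_Icc_one_sub_one_eq_mul_prod_mul_reflect {M : Type*} [CommMonoid M]
    (f : ℕ → M) {n : ℕ} (hn : n ≠ 0) :
    ∏ j ∈ Icc 1 (n - 1), f j
      = (if Even n then f (n / 2) else 1) * ∏ j ∈ Icc 1 ((n - 1) / 2), f j * f (n - j) := by
  set k := (n - 1) / 2
  have hIcc (a : ℕ) : Icc 1 a = Ioc 0 a := Icc_add_one_left_eq_Ioc 0 a
  have hreflect : ∏ j ∈ Ioc 0 k, f (n - j) = ∏ j ∈ Ioc (n - k - 1) (n - 1), f j := by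
    refine prod_nbij' (fun j => n - j) (fun j => n - j) ?_ ?_ ?_ ?_ (fun _ _ => rfl) <;>
      intro j hj <;> simp only [mem_Ioc] at * <;> omega
  rw [hIcc, hIcc, prod_mul_distrib, hreflect]
  rcases Nat.even_or_odd n with hev | hodd
  · have hmid : n / 2 = k + 1 := by rcases hev with ⟨t, rfl⟩; omega
    rw [if_pos hev, hmid, ← prod_Ioc_consecutive f (Nat.zero_le (k + 1)) (by omega),
      prod_Ioc_succ_top (Nat.zero_le k), show n - k - 1 = k + 1 by omega]
    ac_rfl
  · have hk : n - k - 1 = k := by rcases hodd with ⟨t, rfl⟩; omega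
    rw [if_neg (Nat.not_even_iff_odd.mpr hodd), one_mul,
      ← prod_Ioc_consecutive f (Nat.zero_le k) (by omega), hk]

theorem Real.cos_natCast_sub_mul_pi_div {n j : ℕ} (hn : n ≠ 0) (hj : j ≤ n) :
    cos (((n - j : ℕ) : ℝ) * π / n) = -cos (j * π / n) := by
  rw [← cos_pi_sub]
  congr 1
  push_cast [hj]
  field_simp

/-- For `m ≥ 1`, the factorization
`T_m(u)² - 1 = 4^{m-1}·(u²-1)·(u²)^{[m even]}·Π_{j=1}^{⌊(m-1)/2⌋} (u² - cos²(jπ/m))²`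
holds for all real `u`. -/
theorem chebyshev_T_sq_sub_one_factorization (m : ℕ) (hm : 1 ≤ m) (u : ℝ) :
    (Polynomial.Chebyshev.T ℝ (m : ℤ)).eval u ^ 2 - 1
      = 4 ^ (m - 1) * (u ^ 2 - 1) * (u ^ 2) ^ (if Even m then 1 else 0) *
          ∏ j ∈ Finset.Icc 1 ((m - 1) / 2), (u ^ 2 - Real.cos (j * π / m) ^ 2) ^ 2 := by
  have hm0 : m ≠ 0 := by omega
  have hpell := congrArg (eval u) (Polynomial.Chebyshev.T_sq_sub_mul_U_sq ℝ m)
  have hU := congrArg (eval u) (Polynomial.Chebyshev.U_real_natCast_sub_one_eq_C_mul_prod hm0)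
  simp only [eval_sub, eval_mul, eval_pow, eval_X, eval_one, eval_C, eval_prod] at hpell hU
  have hpair (j : ℕ) (hj : j ≤ m) :
      (u - cos (j * π / m)) * (u - cos ((m - j : ℕ) * π / m))
        = u ^ 2 - cos (j * π / m) ^ 2 := by
    rw [Real.cos_natCast_sub_mul_pi_div hm0 hj]; ring
  have hmid (he : Even m) : cos ((m / 2 : ℕ) * π / m) = 0 := by
    have := Real.cos_natCast_sub_mul_pi_div hm0 (Nat.div_le_self m 2)
    rw [show m - m / 2 = m / 2 by obtain ⟨t, rfl⟩ := he; omega] at this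
    linarith
  rw [Finset.prod_Icc_one_sub_one_eq_mul_prod_mul_reflect _ hm0,
    prod_congr rfl fun j hj => hpair j (by rw [mem_Icc] at hj; omega)] at hU
  have hsq : (Polynomial.Chebyshev.T ℝ m).eval u ^ 2 - 1
      = (u ^ 2 - 1) * (Polynomial.Chebyshev.U ℝ (m - 1)).eval u ^ 2 := by
    linear_combination hpell
  have h4 : (4 : ℝ) ^ (m - 1) = (2 ^ (m - 1)) ^ 2 := by
    rw [← pow_mul, mul_comm, pow_mul]; norm_num
  rw [hsq, hU, prod_pow, h4]
  split_ifs with he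
  · rw [hmid he]; ring
  · ring
end
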